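/- arXiv:1605.06846 — 2 statements merged into one kernel-verified Lean document; each statement's English description precedes it below -/
import Mathlib

section
/- Let P and P' be (possibly unbounded) self-adjoint operators on a Hilbert space H. If there exists a constant C > 0 such that ‖e^{iPt} − e^{iP't}‖ ≤ C|t| for all t ∈ ℝ, then D(P) = D(P') and P − P' extends to a bounded operator of norm at most C. -/
/-!
For `x ∈ D(P)` the orbit `t ↦ U t x` is Lipschitz at `0`, hence so is `t ↦ U' t x`, because
`‖U t - U' t‖ ≤ C|t|`. As `⟪x, U' t z⟫ = ⟪U' (-t) x, z⟫`, differentiating at `0` bounds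
`z ↦ ⟪x, P' z⟫` on `D(P')`, so `x ∈ D(P'†) = D(P')`; by symmetry `D(P) = D(P')`. On this dense
common domain, differentiating `(U t - U' t) x` at `0` gives `‖(P - P') x‖ ≤ C‖x‖`, and `P - P'`
extends by continuity.
-/

open Complex Filter Topology Asymptotics
open scoped InnerProductSpace

theorem star_apply_eq_apply_neg {G A : Type*} [AddGroup G] [Monoid A] [StarMul A] {U : G → A}
    (hU0 : U 0 = 1) (hadd : ∀ s t, U (s + t) = U s * U t) (hunit : ∀ t, U t ∈ unitary A)
    (t : G) : star (U t) = U (-t) :=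
  left_inv_eq_right_inv (Unitary.star_mul_self_of_mem (hunit t)) <| by
    rw [← hadd, add_neg_cancel, hU0]

theorem LinearPMap.exists_extension_of_dense_of_bound {𝕜 E F : Type*} [RCLike 𝕜]
    [NormedAddCommGroup E] [NormedSpace 𝕜 E] [NormedAddCommGroup F] [NormedSpace 𝕜 F]
    [CompleteSpace F] (f : E →ₗ.[𝕜] F) (hf : Dense (f.domain : Set E)) {C : ℝ} (hC0 : 0 ≤ C)
    (hC : ∀ x, ‖f x‖ ≤ C * ‖x‖) : ∃ T : E →L[𝕜] F, ‖T‖ ≤ C ∧ ∀ x : f.domain, T x = f x := by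
  have hdense : DenseRange f.domain.subtypeL := hf.denseRange_val
  have hiso : ∀ x : f.domain, ‖x‖ ≤ (1 : NNReal) * ‖f.domain.subtypeL x‖ := by simp
  refine ⟨(f.toFun.mkContinuous C hC).extend f.domain.subtypeL, ?_, fun x => ?_⟩
  · exact (ContinuousLinearMap.opNorm_extend_le _ hdense hiso).trans
      (by simpa using LinearMap.mkContinuous_norm_le _ hC0 hC)
  · exact ContinuousLinearMap.extend_eq _ hdense isUniformEmbedding_subtype_val.isUniformInducing x

section

variable {H : Type*} [NormedAddCommGroup H] [InnerProductSpace ℂ H]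

theorem mem_domain_of_isBigO_orbit [CompleteSpace H] {A : H →ₗ.[ℂ] H} (hA : IsSelfAdjoint A)
    {U : ℝ → H →L[ℂ] H} (hU0 : U 0 = 1) (hstar : ∀ t, star (U t) = U (-t))
    (hgen : ∀ z : A.domain, HasDerivAt (fun t : ℝ => U t z) (I • A z) 0)
    {x : H} (hx : (fun t : ℝ => U t x - x) =O[𝓝 0] fun t => t) : x ∈ A.domain := by
  obtain ⟨K, hK0, hK⟩ := hx.exists_nonneg
  have hneg : ∀ᶠ t : ℝ in 𝓝 0, ‖U (-t) x - x‖ ≤ K * ‖t‖ := by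
    simpa using (continuous_neg.tendsto' (0 : ℝ) 0 neg_zero).eventually hK.bound
  rw [← LinearPMap.isSelfAdjoint_def.mp hA, LinearPMap.mem_adjoint_domain_iff]
  refine AddMonoidHomClass.continuous_of_bound _ K fun z => ?_
  have hd : HasDerivAt (fun t : ℝ => ⟪x, U t z⟫_ℂ) ⟪x, I • A z⟫_ℂ 0 :=
    ((innerSL ℂ x).restrictScalars ℝ).hasFDerivAt.comp_hasDerivAt 0 (hgen z)
  have := hd.le_of_lip' (mul_nonneg hK0 (norm_nonneg z)) <| hneg.mono fun t ht => by
    calc ‖⟪x, U t z⟫_ℂ - ⟪x, U 0 z⟫_ℂ‖ = ‖⟪U (-t) x - x, z⟫_ℂ‖ := by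
          rw [hU0, one_apply_eq_self, inner_sub_left, ← hstar,
            ContinuousLinearMap.star_eq_adjoint, ContinuousLinearMap.adjoint_inner_left]
      _ ≤ ‖U (-t) x - x‖ * ‖z‖ := norm_inner_le_norm _ _
      _ ≤ K * ‖z‖ * ‖t - 0‖ := by rw [sub_zero, mul_right_comm]; gcongr
  simpa [inner_smul_right] using this

theorem domain_le_of_isBigO_sub [CompleteSpace H] {A B : H →ₗ.[ℂ] H} (hB : IsSelfAdjoint B)
    {U V : ℝ → H →L[ℂ] H} (hU0 : U 0 = 1) (hV0 : V 0 = 1) (hVstar : ∀ t, star (V t) = V (-t))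
    (hUgen : ∀ x : A.domain, HasDerivAt (fun t : ℝ => U t x) (I • A x) 0)
    (hVgen : ∀ x : B.domain, HasDerivAt (fun t : ℝ => V t x) (I • B x) 0)
    (hUV : (fun t => U t - V t) =O[𝓝 0] fun t : ℝ => t) : A.domain ≤ B.domain := by
  intro x hx
  refine mem_domain_of_isBigO_orbit hB hV0 hVstar hVgen ?_
  have hU : (fun t : ℝ => U t x - x) =O[𝓝 0] fun t => t := by
    simpa [hU0] using (hUgen ⟨x, hx⟩).isBigO_sub
  have hUVx : (fun t : ℝ => (U t - V t) x) =O[𝓝 0] fun t => t :=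
    ((ContinuousLinearMap.apply ℂ H x).isBigO_comp _ _).trans hUV
  exact (hU.sub hUVx).congr_left fun t => by rw [sub_apply]; abel

theorem norm_sub_apply_le {A B : H →ₗ.[ℂ] H} {U V : ℝ → H →L[ℂ] H} (hU0 : U 0 = 1)
    (hV0 : V 0 = 1) (hUgen : ∀ x : A.domain, HasDerivAt (fun t : ℝ => U t x) (I • A x) 0)
    (hVgen : ∀ x : B.domain, HasDerivAt (fun t : ℝ => V t x) (I • B x) 0)
    {C : ℝ} (hC0 : 0 ≤ C) (hC : ∀ t, ‖U t - V t‖ ≤ C * |t|) (x : (A - B).domain) :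
    ‖(A - B) x‖ ≤ C * ‖x‖ := by
  have hd := (hUgen ⟨x, x.2.1⟩).sub (hVgen ⟨x, x.2.2⟩)
  have := hd.le_of_lip' (mul_nonneg hC0 (norm_nonneg x)) <| .of_forall fun t => by
    calc ‖U t x - V t x - (U 0 x - V 0 x)‖ = ‖(U t - V t) x‖ := by simp [hU0, hV0]
      _ ≤ ‖U t - V t‖ * ‖x‖ := (U t - V t).le_opNorm _
      _ ≤ C * ‖x‖ * ‖t - 0‖ := by
          rw [sub_zero, Real.norm_eq_abs, mul_right_comm]; gcongr; exact hC t
  rwa [← smul_sub, norm_smul, norm_I, one_mul] at this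

end

theorem unbounded_perturbation_of_group_estimate_general
    {H : Type*} [NormedAddCommGroup H] [InnerProductSpace ℂ H] [CompleteSpace H]
    (P P' : H →ₗ.[ℂ] H) (hP : IsSelfAdjoint P) (hP' : IsSelfAdjoint P')
    (U U' : ℝ → (H →L[ℂ] H))
    (hU0 : U 0 = 1) (hU'0 : U' 0 = 1)
    (hUgrp : ∀ s t : ℝ, U (s + t) = U s * U t)
    (hU'grp : ∀ s t : ℝ, U' (s + t) = U' s * U' t)
    (hUunit : ∀ t, U t ∈ unitary (H →L[ℂ] H))
    (hU'unit : ∀ t, U' t ∈ unitary (H →L[ℂ] H))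
    -- `P` is the Stone generator of `U`:
    (hgen : ∀ x : P.domain, HasDerivAt (fun t : ℝ => U t (x : H)) (Complex.I • P x) 0)
    -- `P'` is the Stone generator of `U'`:
    (hgen' : ∀ x : P'.domain, HasDerivAt (fun t : ℝ => U' t (x : H)) (Complex.I • P' x) 0)
    (C : ℝ)
    (hC : ∀ t : ℝ, ‖U t - U' t‖ ≤ C * |t|) :
    P.domain = P'.domain ∧
      ∃ T : H →L[ℂ] H, ‖T‖ ≤ C ∧
        ∀ (x : H) (hx : x ∈ P.domain) (hx' : x ∈ P'.domain),
          T x = P ⟨x, hx⟩ - P' ⟨x, hx'⟩ := by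
  have hC0 : 0 ≤ C := (norm_nonneg _).trans (by simpa using hC 1)
  have hUU' : (fun t => U t - U' t) =O[𝓝 0] fun t : ℝ => t :=
    .of_bound C (.of_forall fun t => by simpa using hC t)
  have hdom : P.domain = P'.domain := le_antisymm
    (domain_le_of_isBigO_sub hP' hU0 hU'0 (star_apply_eq_apply_neg hU'0 hU'grp hU'unit)
      hgen hgen' hUU')
    (domain_le_of_isBigO_sub hP hU'0 hU0 (star_apply_eq_apply_neg hU0 hUgrp hUunit)
      hgen' hgen ((isBigO_neg_left.mpr hUU').congr_left fun t => neg_sub _ _))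
  have hdense : Dense ((P - P').domain : Set H) := by
    rw [LinearPMap.sub_domain, ← hdom, inf_idem]
    exact hP.dense_domain
  obtain ⟨T, hT, hTP⟩ := (P - P').exists_extension_of_dense_of_bound hdense hC0
    (norm_sub_apply_le hU0 hU'0 hgen hgen' hC0 hC)
  exact ⟨hdom, T, hT, fun x hx hx' => hTP ⟨x, hx, hx'⟩⟩

/-- If the unitary groups generated by self-adjoint operators `P`, `P'` satisfy
`‖e^{iPt} − e^{iP't}‖ ≤ C|t|` for all `t`, then `D(P) = D(P')` and `P − P'` extends to a
bounded operator of norm at most `C`. -/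
theorem unbounded_perturbation_of_group_estimate
    {H : Type*} [NormedAddCommGroup H] [InnerProductSpace ℂ H] [CompleteSpace H]
    (P P' : H →ₗ.[ℂ] H) (hP : IsSelfAdjoint P) (hP' : IsSelfAdjoint P')
    (U U' : ℝ → (H →L[ℂ] H))
    (hU0 : U 0 = 1) (hU'0 : U' 0 = 1)
    (hUgrp : ∀ s t : ℝ, U (s + t) = U s * U t)
    (hU'grp : ∀ s t : ℝ, U' (s + t) = U' s * U' t)
    (hUunit : ∀ t, U t ∈ unitary (H →L[ℂ] H))
    (hU'unit : ∀ t, U' t ∈ unitary (H →L[ℂ] H))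
    -- `P` is the Stone generator of `U`:
    (hgen : ∀ x : P.domain, HasDerivAt (fun t : ℝ => U t (x : H)) (Complex.I • P x) 0)
    (hgen_max : ∀ (ξ : H) (d : H), HasDerivAt (fun t : ℝ => U t ξ) d 0 → ξ ∈ P.domain)
    -- `P'` is the Stone generator of `U'`:
    (hgen' : ∀ x : P'.domain, HasDerivAt (fun t : ℝ => U' t (x : H)) (Complex.I • P' x) 0)
    (hgen'_max : ∀ (ξ : H) (d : H), HasDerivAt (fun t : ℝ => U' t ξ) d 0 → ξ ∈ P'.domain)
    (C : ℝ) (hCpos : 0 < C)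
    (hC : ∀ t : ℝ, ‖U t - U' t‖ ≤ C * |t|) :
    P.domain = P'.domain ∧
      ∃ T : H →L[ℂ] H, ‖T‖ ≤ C ∧
        ∀ (x : H) (hx : x ∈ P.domain) (hx' : x ∈ P'.domain),
          T x = P ⟨x, hx⟩ - P' ⟨x, hx'⟩ :=
  unbounded_perturbation_of_group_estimate_general P P' hP hP' U U' hU0 hU'0 hUgrp hU'grp hUunit
    hU'unit hgen hgen' C hC
end

section
/- Let θ be a real skew-symmetric d×d matrix and let u : ℝᵈ → U(H) be defined from one-parameter unitary groups u₁,…,u_d satisfying u_j(s)u_k(t) = e^{istθ_{jk}} u_k(t)u_j(s), via u(s) = exp(−(i/2)∑_{j<k} θ_{jk} s_j s_k) · u₁(s₁)⋯u_d(s_d). Then u satisfies u(s)u(t) = e^{(i/2)θ(s,t)} u(s+t) for all s, t ∈ ℝᵈ, where θ(s,t) = ∑_{j,k} θ_{jk} s_j t_k. -/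
/-!
Reordering `u₁(s₁)⋯u_d(s_d) · u₁(t₁)⋯u_d(t_d)` into `u₁(s₁+t₁)⋯u_d(s_d+t_d)` moves each `u_k(t_k)`
to the left past the factors `u_j(s_j)` with `j > k`, which produces the phase
`exp(i ∑_{k<j} θ_{jk} s_j t_k)`. Together with the normalising phases of `U s`, `U t` and
`U (s + t)` this gives `e^{(i/2)θ(s,t)}`: by skew-symmetry of `θ`, the difference of the two
exponents is a double sum whose summand is antisymmetric in `(j, k)`.
-/

open Complex

section WeylProduct

variable {R A M : Type*} [CommMonoid R] [Monoid A] [MulAction R A] [IsScalarTower R A A]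
  [SMulCommClass R A A]

theorem ofFn_prod_mul_eq_smul {n : ℕ} (v : Fin n → A) (a : A) (c : Fin n → R)
    (h : ∀ k, v k * a = c k • (a * v k)) :
    (List.ofFn v).prod * a = (∏ k, c k) • (a * (List.ofFn v).prod) := by
  induction n with
  | zero => simp
  | succ n ih =>
    rw [List.ofFn_succ, List.prod_cons, Fin.prod_univ_succ, mul_assoc,
      ih (fun k => v k.succ) (fun k => c k.succ) (fun k => h k.succ), mul_smul_comm,
      ← mul_assoc, h 0, smul_mul_assoc, smul_smul, mul_comm (c 0), mul_assoc]

theorem ofFn_prod_mul_ofFn_prod_of_commute_smul [Add M] {n : ℕ} (u : Fin n → M → A)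
    (c : Fin n → Fin n → M → M → R) (hadd : ∀ j a b, u j (a + b) = u j a * u j b)
    (hcomm : ∀ j k a b, u j a * u k b = c j k a b • (u k b * u j a)) (s t : Fin n → M) :
    (List.ofFn fun j => u j (s j)).prod * (List.ofFn fun j => u j (t j)).prod =
      (∏ j, ∏ k, if k < j then c j k (s j) (t k) else 1) •
        (List.ofFn fun j => u j (s j + t j)).prod := by
  induction n with
  | zero => simp
  | succ n ih =>
    simp only [List.ofFn_succ, List.prod_cons]
    set P := fun x : Fin n → M => (List.ofFn fun j => u j.succ (x j)).prod
    calc u 0 (s 0) * P (fun j => s j.succ) * (u 0 (t 0) * P (fun j => t j.succ))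
        = u 0 (s 0) * (P (fun j => s j.succ) * u 0 (t 0)) * P (fun j => t j.succ) := by
          simp only [mul_assoc]
      _ = (∏ k : Fin n, c k.succ 0 (s k.succ) (t 0)) •
            (u 0 (s 0) * u 0 (t 0) * (P (fun j => s j.succ) * P (fun j => t j.succ))) := by
          rw [ofFn_prod_mul_eq_smul _ _ _ fun k => hcomm k.succ 0 (s k.succ) (t 0)]
          simp only [P, mul_smul_comm, smul_mul_assoc, mul_assoc]
      _ = _ := by
          rw [ih (fun j => u j.succ) (fun j k => c j.succ k.succ) (fun j => hadd j.succ)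
            (fun j k => hcomm j.succ k.succ), ← hadd, mul_smul_comm, smul_smul]
          congr 1
          simp only [Fin.prod_univ_succ, Fin.succ_lt_succ_iff, Fin.not_lt_zero, Fin.succ_pos,
            if_true, if_false, Finset.prod_const_one, one_mul, Finset.prod_mul_distrib]

end WeylProduct

section PhaseIdentity

variable {ι : Type*} [Fintype ι]

theorem sum_sum_eq_zero_of_antisymm (D : ι → ι → ℝ) (hD : ∀ j k, D k j = -D j k) :
    ∑ j, ∑ k, D j k = 0 := by
  have h : ∑ j, ∑ k, D j k = -∑ j, ∑ k, D j k := calc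
    _ = ∑ k, ∑ j, D j k := Finset.sum_comm
    _ = ∑ k, ∑ j, -D k j := Finset.sum_congr rfl fun k _ => Finset.sum_congr rfl fun j _ => hD k j
    _ = _ := by simp only [Finset.sum_neg_distrib]
  linarith

theorem weyl_phase_identity [LinearOrder ι] (θ : ι → ι → ℝ) (hskew : ∀ j k, θ k j = -θ j k)
    (s t : ι → ℝ) :
    2 * (∑ j, ∑ k, if k < j then θ j k * s j * t k else 0) -
        ((∑ j, ∑ k, if j < k then θ j k * s j * s k else 0) +
          (∑ j, ∑ k, if j < k then θ j k * t j * t k else 0)) =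
      (∑ j, ∑ k, θ j k * s j * t k) -
        ∑ j, ∑ k, if j < k then θ j k * (s + t) j * (s + t) k else 0 := by
  rw [← sub_eq_zero]
  convert sum_sum_eq_zero_of_antisymm (fun j k => (2 * (if k < j then θ j k * s j * t k else 0) -
        ((if j < k then θ j k * s j * s k else 0) + (if j < k then θ j k * t j * t k else 0))) -
      (θ j k * s j * t k - if j < k then θ j k * (s + t) j * (s + t) k else 0)) ?_ using 1
  · simp only [Finset.sum_sub_distrib, Finset.sum_add_distrib, Finset.mul_sum]
  · intro j k
    have hjj : θ j j = 0 := by linarith [hskew j j]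
    rcases lt_trichotomy j k with h | rfl | h
    · simp only [h, h.not_gt, if_true, if_false, hskew j k, Pi.add_apply]; ring
    · simp [hjj]
    · simp only [h, h.not_gt, if_true, if_false, hskew j k, Pi.add_apply]; ring

end PhaseIdentity

theorem projective_rep_of_weyl_system_general
    {H : Type*} [NormedAddCommGroup H] [InnerProductSpace ℂ H]
    (d : ℕ) (θ : Fin d → Fin d → ℝ) (hskew : ∀ j k, θ k j = -θ j k)
    (u : Fin d → ℝ → (H →L[ℂ] H))
    (hugrp : ∀ j (s t : ℝ), u j (s + t) = u j s * u j t)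
    (hweyl : ∀ j k (s t : ℝ),
      u j s * u k t = Complex.exp (Complex.I * s * t * θ j k) • (u k t * u j s))
    (U : (Fin d → ℝ) → (H →L[ℂ] H))
    (hU : ∀ s : Fin d → ℝ,
      U s = Complex.exp (-(Complex.I / 2) *
          ((∑ j, ∑ k, if j < k then θ j k * s j * s k else 0 : ℝ) : ℂ)) •
        (List.ofFn fun j => u j (s j)).prod) :
    ∀ s t : Fin d → ℝ,
      U s * U t =
        Complex.exp ((Complex.I / 2) * ((∑ j, ∑ k, θ j k * s j * t k : ℝ) : ℂ)) • U (s + t) := by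
  intro s t
  have hphase : (∏ j, ∏ k, if k < j then Complex.exp (I * s j * t k * θ j k) else 1) =
      Complex.exp (I * ((∑ j, ∑ k, if k < j then θ j k * s j * t k else 0 : ℝ) : ℂ)) := by
    have h : ∀ j k, (if k < j then Complex.exp (I * s j * t k * θ j k) else 1) =
        Complex.exp (I * ((if k < j then θ j k * s j * t k else 0 : ℝ) : ℂ)) := by
      intro j k
      split_ifs
      · congr 1; push_cast; ring
      · simp
    simp only [h, ← Complex.exp_sum, ← Finset.mul_sum, ← ofReal_sum]
  rw [hU s, hU t, hU (s + t), smul_mul_smul_comm,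
    ofFn_prod_mul_ofFn_prod_of_commute_smul u _ hugrp hweyl, hphase, smul_smul, smul_smul,
    ← Complex.exp_add, ← Complex.exp_add, ← Complex.exp_add]
  congr 2
  have := congrArg ((↑) : ℝ → ℂ) (weyl_phase_identity θ hskew s t)
  push_cast at this ⊢
  linear_combination (I / 2) * this

/-- Given one-parameter unitary groups `u₁,…,u_d` satisfying the Weyl relations
`u_j(s)u_k(t) = e^{istθ_{jk}} u_k(t)u_j(s)` for a real skew-symmetric matrix `θ`, the map
`u(s) = exp(−(i/2)∑_{j<k} θ_{jk}s_j s_k) u₁(s₁)⋯u_d(s_d)` satisfies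
`u(s)u(t) = e^{(i/2)θ(s,t)} u(s+t)`, where `θ(s,t) = ∑_{j,k} θ_{jk} s_j t_k`. -/
theorem projective_rep_of_weyl_system
    {H : Type*} [NormedAddCommGroup H] [InnerProductSpace ℂ H] [CompleteSpace H]
    (d : ℕ) (θ : Fin d → Fin d → ℝ) (hskew : ∀ j k, θ k j = -θ j k)
    (u : Fin d → ℝ → (H →L[ℂ] H))
    (hu0 : ∀ j, u j 0 = 1)
    (hugrp : ∀ j (s t : ℝ), u j (s + t) = u j s * u j t)
    (huunit : ∀ j s, u j s ∈ unitary (H →L[ℂ] H))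
    (hweyl : ∀ j k (s t : ℝ),
      u j s * u k t = Complex.exp (Complex.I * s * t * θ j k) • (u k t * u j s))
    (U : (Fin d → ℝ) → (H →L[ℂ] H))
    (hU : ∀ s : Fin d → ℝ,
      U s = Complex.exp (-(Complex.I / 2) *
          ((∑ j, ∑ k, if j < k then θ j k * s j * s k else 0 : ℝ) : ℂ)) •
        (List.ofFn fun j => u j (s j)).prod) :
    ∀ s t : Fin d → ℝ,
      U s * U t =
        Complex.exp ((Complex.I / 2) * ((∑ j, ∑ k, θ j k * s j * t k : ℝ) : ℂ)) • U (s + t) :=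
  projective_rep_of_weyl_system_general d θ hskew u hugrp hweyl U hU
end
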